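/- arXiv:2301.04681 — 5 statements merged into one kernel-verified Lean document; each statement's English description precedes it below -/
import Mathlib

section
/- For an integer m ≥ 2: (a) for all 1 ≤ i < k ≤ m, the quantity (⟨α_i ⊙ α_i, α_k⟩ / (|α_i|² |α_k|))² equals 1/(k + k²); and (b) for all 1 ≤ i ≤ m, the quantity (⟨α_i ⊙ α_i, α_i⟩ / |α_i|³)² equals (1 − i)² / (i(1 + i)). Here ⟨·,·⟩ and |·| denote the standard Euclidean inner product and norm on ℝ^{m+1}. -/
/-- The vector `α_i ∈ ℝ^{m+1}`: first `i` coordinates equal `1`, the `(i+1)`-th coordinate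
equals `-i`, and the remaining `m - i` coordinates equal `0`. -/
noncomputable def LOalpha (m i : ℕ) : Fin (m + 1) → ℝ :=
  fun j => if (j : ℕ) < i then 1 else if (j : ℕ) = i then -(i : ℝ) else 0

/-- The Euclidean norm of `α_i`. -/
noncomputable def LOnorm (m i : ℕ) : ℝ :=
  Real.sqrt (∑ j : Fin (m + 1), LOalpha m i j * LOalpha m i j)

lemma LOsum_aux (m i : ℕ) (hi : i ≤ m) (c1 c2 : ℝ) :
    ∑ j : Fin (m + 1), (if (j : ℕ) < i then c1 else if (j : ℕ) = i then c2 else 0)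
      = i * c1 + c2 := by
  rw [Fin.sum_univ_eq_sum_range (fun j => if j < i then c1 else if j = i then c2 else 0)]
  rw [Finset.range_eq_Ico, ← Finset.sum_Ico_consecutive _ (Nat.zero_le i) (by omega : i ≤ m + 1)]
  have h1 : ∑ j ∈ Finset.Ico 0 i, (if j < i then c1 else if j = i then c2 else 0) = i * c1 := by
    rw [Finset.sum_congr rfl (fun j hj => by
      simp only [Finset.mem_Ico] at hj; rw [if_pos hj.2])]
    simp [mul_comm]
  have h2 : ∑ j ∈ Finset.Ico i (m + 1), (if j < i then c1 else if j = i then c2 else 0) = c2 := by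
    rw [Finset.sum_congr rfl (fun j hj => by
      simp only [Finset.mem_Ico] at hj; rw [if_neg (by omega)])]
    rw [Finset.sum_ite_eq' (Finset.Ico i (m+1)) i (fun _ => c2)]
    simp [Finset.mem_Ico]; omega
  rw [h1, h2]

lemma LOnorm_sq (m i : ℕ) (hi : i ≤ m) :
    (LOnorm m i) ^ 2 = (i : ℝ) + (i : ℝ) ^ 2 := by
  have hs : ∑ j : Fin (m + 1), LOalpha m i j * LOalpha m i j = (i : ℝ) + (i : ℝ) ^ 2 := by
    have := LOsum_aux m i hi 1 ((i : ℝ) ^ 2)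
    rw [show (i:ℝ) + (i:ℝ)^2 = (i:ℝ)*1 + (i:ℝ)^2 by ring, ← this]
    refine Finset.sum_congr rfl fun j _ => ?_
    simp only [LOalpha]; split_ifs <;> ring
  rw [LOnorm, hs, Real.sq_sqrt (by positivity)]

/-- The squared normalized structural quantities of Ledger–Obata spaces:
`(⟨α_i⊙α_i, α_k⟩/(|α_i|²|α_k|))² = 1/(k+k²)` for `i < k` and
`(⟨α_i⊙α_i, α_i⟩/|α_i|³)² = (1-i)²/(i(1+i))`. -/
theorem structural_constants (m : ℕ) (hm : 2 ≤ m) :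
    (∀ i k : ℕ, 1 ≤ i → i < k → k ≤ m →
      ((∑ j : Fin (m + 1), (LOalpha m i j * LOalpha m i j) * LOalpha m k j) /
          ((LOnorm m i) ^ 2 * LOnorm m k)) ^ 2 = 1 / ((k : ℝ) + (k : ℝ) ^ 2)) ∧
    (∀ i : ℕ, 1 ≤ i → i ≤ m →
      ((∑ j : Fin (m + 1), (LOalpha m i j * LOalpha m i j) * LOalpha m i j) /
          (LOnorm m i) ^ 3) ^ 2 = (1 - (i : ℝ)) ^ 2 / ((i : ℝ) * (1 + (i : ℝ)))) := by
  constructor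
  · intro i k hi hik hk
    have hi' : i ≤ m := by omega
    have hnum : ∑ j : Fin (m + 1), (LOalpha m i j * LOalpha m i j) * LOalpha m k j
        = (i : ℝ) + (i : ℝ) ^ 2 := by
      have := LOsum_aux m i hi' 1 ((i : ℝ) ^ 2)
      rw [show (i:ℝ) + (i:ℝ)^2 = (i:ℝ)*1 + (i:ℝ)^2 by ring, ← this]
      refine Finset.sum_congr rfl fun j _ => ?_
      simp only [LOalpha]
      split_ifs <;> try ring
      all_goals (exfalso; omega)
    have hk2 : (LOnorm m k) ^ 2 = (k : ℝ) + (k : ℝ) ^ 2 := LOnorm_sq m k hk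
    have hii : (LOnorm m i) ^ 2 = (i : ℝ) + (i : ℝ) ^ 2 := LOnorm_sq m i hi'
    have hipos : (0 : ℝ) < (i : ℝ) + (i : ℝ) ^ 2 := by
      have : (1 : ℝ) ≤ (i : ℝ) := by exact_mod_cast hi
      nlinarith
    have hkpos : (0 : ℝ) < (k : ℝ) + (k : ℝ) ^ 2 := by
      have : (1 : ℝ) ≤ (k : ℝ) := by exact_mod_cast (by omega : 1 ≤ k)
      nlinarith
    rw [hnum, hii, div_pow, mul_pow, hk2]
    field_simp
  · intro i hi hi'
    have hnum : ∑ j : Fin (m + 1), (LOalpha m i j * LOalpha m i j) * LOalpha m i j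
        = (i : ℝ) - (i : ℝ) ^ 3 := by
      have := LOsum_aux m i hi' 1 (-(i : ℝ) ^ 3)
      rw [show (i:ℝ) - (i:ℝ)^3 = (i:ℝ) * 1 + -(i:ℝ)^3 by ring, ← this]
      refine Finset.sum_congr rfl fun j _ => ?_
      simp only [LOalpha]
      split_ifs <;> ring
    have hii : (LOnorm m i) ^ 2 = (i : ℝ) + (i : ℝ) ^ 2 := LOnorm_sq m i hi'
    have hipos : (0 : ℝ) < (i : ℝ) + (i : ℝ) ^ 2 := by
      have : (1 : ℝ) ≤ (i : ℝ) := by exact_mod_cast hi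
      nlinarith
    have h6 : ((LOnorm m i) ^ 3) ^ 2 = ((i : ℝ) + (i : ℝ) ^ 2) ^ 3 := by
      rw [← pow_mul, show 3 * 2 = 2 * 3 by rfl, pow_mul, hii]
    rw [hnum, div_pow, h6]
    have hi1 : (1 : ℝ) ≤ (i : ℝ) := by exact_mod_cast hi
    have hipos' : (0 : ℝ) < (i : ℝ) := by linarith
    have h1i : (0 : ℝ) < 1 + (i : ℝ) := by linarith
    field_simp
    ring
end

section
/- For an integer m ≥ 2, let L be the m×m real symmetric matrix with entries L_{rs} = −1/(k + k²) where k = max(r,s), for r ≠ s, and L_{ss} = (s − 1 − s²)/(s + s²) + m/(m+1). For each 1 ≤ i ≤ m−1, the vector v_i ∈ ℝ^m whose first i coordinates equal 1, whose (i+1)-th coordinate equals −i, and whose remaining coordinates equal 0 is an eigenvector of L with eigenvalue a_i := m/(m+1) − i/(i+2), i.e., L v_i = a_i v_i. -/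
/-- The `m × m` matrix of the Lichnerowicz Laplacian of the standard metric on the
Ledger–Obata space `F^{m+1}/Δ^{m+1}F` (a Lean index `r : Fin m` corresponds to the paper
index `r + 1`). -/
noncomputable def Lmat (m : ℕ) : Matrix (Fin m) (Fin m) ℝ :=
  fun r s =>
    if r = s then
      (((s : ℕ) : ℝ) + 1 - 1 - (((s : ℕ) : ℝ) + 1) ^ 2) /
          ((((s : ℕ) : ℝ) + 1) + (((s : ℕ) : ℝ) + 1) ^ 2) + (m : ℝ) / ((m : ℝ) + 1)
    else
      -1 / (((max (r : ℕ) (s : ℕ) : ℕ) : ℝ) + 1 + (((max (r : ℕ) (s : ℕ) : ℕ) : ℝ) + 1) ^ 2)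

/-- The vector `v_i ∈ ℝ^m`: first `i` coordinates equal `1`, the `(i+1)`-th coordinate equals
`-i`, and the remaining coordinates equal `0`. -/
noncomputable def Lvec (m i : ℕ) : Fin m → ℝ :=
  fun t => if (t : ℕ) < i then 1 else if (t : ℕ) = i then -(i : ℝ) else 0

lemma sumS (k : ℕ) :
    ∑ s ∈ Finset.range k, 1 / (((s : ℝ) + 1) + ((s : ℝ) + 1) ^ 2) = (k : ℝ) / ((k : ℝ) + 1) := by
  induction k with
  | zero => simp
  | succ n ih =>
    rw [Finset.sum_range_succ, ih]
    push_cast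
    have h1 : ((n : ℝ) + 1) ≠ 0 := by positivity
    have h2 : ((n : ℝ) + 2) ≠ 0 := by positivity
    have h3 : ((n : ℝ) + 1) + ((n : ℝ) + 1) ^ 2 ≠ 0 := by positivity
    field_simp
    ring

lemma arith1 (x y z : ℝ) (hx1 : x + 1 ≠ 0) (hx2 : x + 2 ≠ 0) (hy1 : y + 1 ≠ 0)
    (hy2 : y + 2 ≠ 0) :
    x * (-1 / ((x + 1) + (x + 1) ^ 2)) +
        ((x + 1 - 1 - (x + 1) ^ 2) / ((x + 1) + (x + 1) ^ 2) + z) +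
        ((x + 1) / (x + 2) - y / (y + 1)) +
        -1 / (y + 1 + (y + 1) ^ 2) * (-y) = (z - y / (y + 2)) * 1 := by
  have ex : (x + 1) + (x + 1) ^ 2 = (x + 1) * (x + 2) := by ring
  have ey : y + 1 + (y + 1) ^ 2 = (y + 1) * (y + 2) := by ring
  rw [ex, ey]
  field_simp
  ring

lemma arith2 (y z : ℝ) (hy1 : y + 1 ≠ 0) (hy2 : y + 2 ≠ 0) :
    y * (-1 / (y + 1 + (y + 1) ^ 2)) +
        ((y + 1 - 1 - (y + 1) ^ 2) / (y + 1 + (y + 1) ^ 2) + z) * (-y) =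
      (z - y / (y + 2)) * (-y) := by
  have ey : y + 1 + (y + 1) ^ 2 = (y + 1) * (y + 2) := by ring
  rw [ey]
  field_simp
  ring

/-- `v_i` is an eigenvector of `L` with eigenvalue `a_i = m/(m+1) - i/(i+2)`. -/
theorem Lmat_eigenvector (m : ℕ) (hm : 2 ≤ m) (i : ℕ) (hi1 : 1 ≤ i) (hi2 : i ≤ m - 1) :
    (Lmat m).mulVec (Lvec m i) =
      ((m : ℝ) / ((m : ℝ) + 1) - (i : ℝ) / ((i : ℝ) + 2)) • Lvec m i := by
  have him : i < m := by omega
  funext r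
  set G : ℕ → ℝ := fun n =>
    (if (r : ℕ) = n then
        ((n : ℝ) + 1 - 1 - ((n : ℝ) + 1) ^ 2) / (((n : ℝ) + 1) + ((n : ℝ) + 1) ^ 2)
          + (m : ℝ) / ((m : ℝ) + 1)
      else -1 / (((max (r : ℕ) n : ℕ) : ℝ) + 1 + (((max (r : ℕ) n : ℕ) : ℝ) + 1) ^ 2)) *
    (if n < i then 1 else if n = i then -(i : ℝ) else 0) with hG
  have hstep : (Lmat m).mulVec (Lvec m i) r = ∑ n ∈ Finset.range m, G n := by
    rw [Matrix.mulVec, dotProduct, ← Fin.sum_univ_eq_sum_range G m]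
    refine Finset.sum_congr rfl fun t _ => ?_
    simp only [Lmat, Lvec, hG, Fin.ext_iff]
  have hsub : ∑ n ∈ Finset.range m, G n = ∑ n ∈ Finset.range (i + 1), G n := by
    refine (Finset.sum_subset (Finset.range_subset_range.2 (by omega)) ?_).symm
    intro n hn hn'
    simp only [Finset.mem_range] at hn hn'
    have c1 : ¬ n < i := by omega
    have c2 : ¬ n = i := by omega
    simp only [hG]
    rw [if_neg c1, if_neg c2, mul_zero]
  rw [hstep, hsub, Finset.sum_range_succ, Pi.smul_apply, smul_eq_mul]
  have di1 : (i : ℝ) + 1 ≠ 0 := by positivity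
  have di2 : (i : ℝ) + 2 ≠ 0 := by positivity
  have dr1 : ((r : ℕ) : ℝ) + 1 ≠ 0 := by positivity
  have dr2 : ((r : ℕ) : ℝ) + 2 ≠ 0 := by positivity
  rcases lt_trichotomy (r : ℕ) i with hri | hri | hri
  · -- r < i : the interesting row
    have hvr : Lvec m i r = 1 := by simp [Lvec, hri]
    have hGi : G i = -1 / ((i : ℝ) + 1 + ((i : ℝ) + 1) ^ 2) * (-(i : ℝ)) := by
      have c1 : ¬ ((r : ℕ) = i) := by omega
      have c2 : ¬ i < i := by omega
      have hmax : max (r : ℕ) i = i := by omega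
      simp only [hG]
      rw [hmax, if_neg c1, if_neg c2]
      simp
    rw [hGi, Finset.range_eq_Ico,
      ← Finset.sum_Ico_consecutive G (Nat.zero_le ((r : ℕ) + 1)) (show (r : ℕ) + 1 ≤ i by omega),
      ← Finset.range_eq_Ico, Finset.sum_range_succ]
    have h1 : ∑ n ∈ Finset.range (r : ℕ), G n =
        ((r : ℕ) : ℝ) * (-1 / ((((r : ℕ) : ℝ) + 1) + (((r : ℕ) : ℝ) + 1) ^ 2)) := by
      rw [Finset.sum_congr rfl (fun n hn => ?_), Finset.sum_const, Finset.card_range,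
        nsmul_eq_mul]
      simp only [Finset.mem_range] at hn
      have c1 : ¬ ((r : ℕ) = n) := by omega
      have c2 : n < i := by omega
      have hmax : max (r : ℕ) n = (r : ℕ) := by omega
      simp only [hG]
      rw [hmax, if_neg c1, if_pos c2, mul_one]
    have h2 : G (r : ℕ) =
        (((r : ℕ) : ℝ) + 1 - 1 - (((r : ℕ) : ℝ) + 1) ^ 2) /
          ((((r : ℕ) : ℝ) + 1) + (((r : ℕ) : ℝ) + 1) ^ 2) + (m : ℝ) / ((m : ℝ) + 1) := by
      simp only [hG]
      simp [hri]
    have h3 : ∑ n ∈ Finset.Ico ((r : ℕ) + 1) i, G n =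
        (((r : ℕ) : ℝ) + 1) / (((r : ℕ) : ℝ) + 2) - (i : ℝ) / ((i : ℝ) + 1) := by
      have e : ∑ n ∈ Finset.Ico ((r : ℕ) + 1) i, G n =
          ∑ n ∈ Finset.Ico ((r : ℕ) + 1) i, -(1 / (((n : ℝ) + 1) + ((n : ℝ) + 1) ^ 2)) := by
        refine Finset.sum_congr rfl fun n hn => ?_
        simp only [Finset.mem_Ico] at hn
        have c1 : ¬ ((r : ℕ) = n) := by omega
        have c2 : n < i := by omega
        have hmax : max (r : ℕ) n = n := by omega
        simp only [hG]
        rw [hmax, if_neg c1, if_pos c2, mul_one, neg_div, one_div]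
      rw [e, Finset.sum_neg_distrib,
        Finset.sum_Ico_eq_sub _ (show (r : ℕ) + 1 ≤ i by omega), sumS, sumS]
      push_cast
      ring
    rw [h1, h2, h3, hvr]
    exact arith1 _ _ _ dr1 dr2 di1 di2
  · -- r = i
    have hvr : Lvec m i r = -(i : ℝ) := by simp [Lvec, hri]
    have hGi : G i =
        (((i : ℝ) + 1 - 1 - ((i : ℝ) + 1) ^ 2) / ((i : ℝ) + 1 + ((i : ℝ) + 1) ^ 2)
            + (m : ℝ) / ((m : ℝ) + 1)) * (-(i : ℝ)) := by
      have c2 : ¬ i < i := by omega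
      simp only [hG]
      simp [hri]
    have h1 : ∑ n ∈ Finset.range i, G n =
        (i : ℝ) * (-1 / ((i : ℝ) + 1 + ((i : ℝ) + 1) ^ 2)) := by
      rw [Finset.sum_congr rfl (fun n hn => ?_), Finset.sum_const, Finset.card_range,
        nsmul_eq_mul]
      simp only [Finset.mem_range] at hn
      have c1 : ¬ ((r : ℕ) = n) := by omega
      have hmax : max (r : ℕ) n = i := by omega
      simp only [hG]
      rw [hmax, if_neg c1, if_pos hn, mul_one]
    rw [h1, hGi, hvr]
    exact arith2 _ _ di1 di2
  · -- r > i : row is zero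
    have hvr : Lvec m i r = 0 := by
      have c1 : ¬ ((r : ℕ) < i) := by omega
      have c2 : ¬ ((r : ℕ) = i) := by omega
      simp only [Lvec]
      rw [if_neg c1, if_neg c2]
    have hGi : G i = -1 / (((r : ℕ) : ℝ) + 1 + (((r : ℕ) : ℝ) + 1) ^ 2) * (-(i : ℝ)) := by
      have c1 : ¬ ((r : ℕ) = i) := by omega
      have c2 : ¬ i < i := by omega
      have hmax : max (r : ℕ) i = (r : ℕ) := by omega
      simp only [hG]
      rw [hmax, if_neg c1, if_neg c2]
      simp
    have h1 : ∑ n ∈ Finset.range i, G n =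
        (i : ℝ) * (-1 / (((r : ℕ) : ℝ) + 1 + (((r : ℕ) : ℝ) + 1) ^ 2)) := by
      rw [Finset.sum_congr rfl (fun n hn => ?_), Finset.sum_const, Finset.card_range,
        nsmul_eq_mul]
      simp only [Finset.mem_range] at hn
      have c1 : ¬ ((r : ℕ) = n) := by omega
      have c2 : n < i := by omega
      have hmax : max (r : ℕ) n = (r : ℕ) := by omega
      simp only [hG]
      rw [hmax, if_neg c1, if_pos c2, mul_one]
    rw [h1, hGi, hvr, mul_zero]
    ring
end

section
/- For an integer m ≥ 2, let L be the m×m real symmetric matrix with entries L_{rs} = −1/(k + k²) where k = max(r,s), for r ≠ s, and L_{ss} = (s − 1 − s²)/(s + s²) + m/(m+1). Then the set of eigenvalues of L is exactly {0} ∪ {m/(m+1) − i/(i+2) : i = 1, …, m−1}. -/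
open Finset Matrix

theorem Module.End.HasEigenvalue.mem_range_of_finrank_le_card {K V ι : Type*} [Field K]
    [AddCommGroup V] [Module K V] [FiniteDimensional K V] [Fintype ι] {f : Module.End K V}
    {μs : ι → K} (hμs : Function.Injective μs) {xs : ι → V}
    (hxs : ∀ i, f.HasEigenvector (μs i) (xs i)) (hcard : Module.finrank K V ≤ Fintype.card ι)
    {μ : K} (hμ : f.HasEigenvalue μ) : μ ∈ Set.range μs := by
  by_contra hμ_new
  obtain ⟨x, hx⟩ := hμ.exists_hasEigenvector
  have hli := f.eigenvectors_linearIndependent' (fun o : Option ι => o.elim μ μs)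
    (Option.injective_iff.2 ⟨hμs, hμ_new⟩) (fun o => o.elim x xs) (fun o => Option.rec hx hxs o)
  have := hli.fintype_card_le_finrank
  rw [Fintype.card_option] at this
  omega

theorem Matrix.hasEigenvector_toLin'_iff {K n : Type*} [Field K] [Fintype n] [DecidableEq n]
    {A : Matrix n n K} {μ : K} {v : n → K} :
    Module.End.HasEigenvector A.toLin' μ v ↔ A *ᵥ v = μ • v ∧ v ≠ 0 := by
  rw [Module.End.hasEigenvector_iff, Module.End.mem_eigenspace_iff, toLin'_apply]

noncomputable def invPronic (k : ℕ) : ℝ := 1 / (((k : ℝ) + 1) * ((k : ℝ) + 2))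

noncomputable def lmatDiag (m r : ℕ) : ℝ := (m : ℝ) / ((m : ℝ) + 1) - (r : ℝ) / ((r : ℝ) + 2)

theorem Lmat_apply (m : ℕ) (r s : Fin m) :
    Lmat m r s = (if r = s then lmatDiag m r else 0) - invPronic (max (r : ℕ) s) := by
  unfold Lmat lmatDiag invPronic
  split_ifs with h
  · subst h
    rw [max_self]
    field_simp
    ring
  · rw [zero_sub, neg_div]
    ring_nf

theorem Lmat_mulVec_apply (m : ℕ) (v : ℕ → ℝ) (r : Fin m) :
    (Lmat m *ᵥ fun s => v s) r = lmatDiag m r * v r - ∑ s ∈ range m, invPronic (max r s) * v s := by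
  simp only [mulVec, dotProduct, Lmat_apply, sub_mul, sum_sub_distrib, ite_mul, zero_mul,
    sum_ite_eq, mem_univ, if_true]
  rw [Fin.sum_univ_eq_sum_range (fun s => invPronic (max r s) * v s)]

theorem sum_range_invPronic_max_of_le_succ {n r : ℕ} (h : n ≤ r + 1) :
    ∑ s ∈ range n, invPronic (max r s) = n * invPronic r := by
  rw [sum_congr rfl fun s hs => by rw [max_eq_left (by simp at hs; omega)], sum_const,
    card_range, nsmul_eq_mul]

theorem sum_range_invPronic_max_of_lt {n r : ℕ} (h : r < n) :
    ∑ s ∈ range n, invPronic (max r s) = lmatDiag n r := by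
  induction n, h using Nat.le_induction with
  | base =>
    rw [sum_range_invPronic_max_of_le_succ le_rfl, lmatDiag, invPronic]
    push_cast
    field_simp
    ring
  | succ n hrn ih =>
    rw [sum_range_succ, ih, max_eq_right (by omega), lmatDiag, lmatDiag, invPronic]
    push_cast
    field_simp
    ring

noncomputable def stepVec (i s : ℕ) : ℝ := if s < i then 1 else if s = i then -i else 0

theorem sum_range_mul_stepVec {n i : ℕ} (hi : i < n) (f : ℕ → ℝ) :
    ∑ s ∈ range n, f s * stepVec i s = ∑ s ∈ range i, f s - i * f i := by
  have hvanish : ∀ s ∈ range n, s ∉ range (i + 1) → f s * stepVec i s = 0 := by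
    intro s _ hs
    simp only [mem_range] at hs
    simp [stepVec, show ¬s < i by omega, show s ≠ i by omega]
  rw [← sum_subset (range_subset_range.2 hi) hvanish, sum_range_succ, sub_eq_add_neg]
  congr 1
  · exact sum_congr rfl fun s hs => by simp [stepVec, mem_range.1 hs]
  · simp [stepVec, mul_comm]

theorem lmatDiag_mul_stepVec_sub_sum {m i : ℕ} (hi : i < m) (r : ℕ) :
    lmatDiag m r * stepVec i r - ∑ s ∈ range m, invPronic (max r s) * stepVec i s =
      lmatDiag m i * stepVec i r := by
  rw [sum_range_mul_stepVec hi]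
  rcases lt_trichotomy r i with hri | rfl | hir
  · rw [sum_range_invPronic_max_of_lt hri, max_eq_right hri.le]
    simp only [stepVec, if_pos hri, lmatDiag, invPronic]
    field_simp
    ring
  · simp [sum_range_invPronic_max_of_le_succ (Nat.le_succ r)]
  · rw [sum_range_invPronic_max_of_le_succ (by omega), max_eq_left hir.le]
    simp [stepVec, show ¬r < i by omega, show r ≠ i by omega]

theorem Lmat_mulVec_one (m : ℕ) : (Lmat m *ᵥ fun _ => 1) = 0 := by
  funext r
  simpa [sum_range_invPronic_max_of_lt r.2] using Lmat_mulVec_apply m (fun _ => 1) r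

theorem Lmat_mulVec_stepVec {m i : ℕ} (hi : i < m) :
    (Lmat m *ᵥ fun s => stepVec i s) = lmatDiag m i • fun s : Fin m => stepVec i s := by
  funext r
  rw [Lmat_mulVec_apply, lmatDiag_mul_stepVec_sub_sum hi]
  rfl

theorem lmatDiag_strictAnti (m : ℕ) : StrictAnti (lmatDiag m) := by
  refine strictAnti_nat_of_succ_lt fun r => ?_
  simp only [lmatDiag, Nat.cast_succ]
  gcongr ?_ - ?_
  rw [div_lt_div_iff₀ (by positivity) (by positivity)]
  linarith

theorem lmatDiag_pos {m r : ℕ} (h : r < m) : 0 < lmatDiag m r := by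
  rw [lmatDiag, sub_pos, div_lt_div_iff₀ (by positivity) (by positivity)]
  have : (r : ℝ) < m := by exact_mod_cast h
  nlinarith

noncomputable def lmatEigenvalue (m j : ℕ) : ℝ := if j = 0 then 0 else lmatDiag m j

noncomputable def lmatEigenvector (m j : ℕ) : Fin m → ℝ :=
  if j = 0 then fun _ => 1 else fun s => stepVec j s

theorem lmatEigenvalue_injOn (m : ℕ) : Set.InjOn (lmatEigenvalue m) (Set.Iio m) := by
  intro i hi j hj hij
  have hpos : ∀ k, k < m → k ≠ 0 → lmatEigenvalue m k ≠ 0 := fun k hk hk0 => by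
    simpa [lmatEigenvalue, hk0] using (lmatDiag_pos hk).ne'
  by_cases hi0 : i = 0 <;> by_cases hj0 : j = 0
  · rw [hi0, hj0]
  · exact absurd (hij.symm.trans (by simp [lmatEigenvalue, hi0])) (hpos j hj hj0)
  · exact absurd (hij.trans (by simp [lmatEigenvalue, hj0])) (hpos i hi hi0)
  · simp only [lmatEigenvalue, if_neg hi0, if_neg hj0] at hij
    exact (lmatDiag_strictAnti m).injective hij

theorem hasEigenvector_lmatEigenvector {m j : ℕ} (hj : j < m) :
    Module.End.HasEigenvector (Lmat m).toLin' (lmatEigenvalue m j) (lmatEigenvector m j) := by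
  rw [hasEigenvector_toLin'_iff]
  by_cases hj0 : j = 0
  · simp only [lmatEigenvalue, lmatEigenvector, if_pos hj0, Lmat_mulVec_one, zero_smul]
    exact ⟨trivial, Function.ne_iff.2 ⟨⟨0, by omega⟩, one_ne_zero⟩⟩
  · simp only [lmatEigenvalue, lmatEigenvector, if_neg hj0, Lmat_mulVec_stepVec hj]
    refine ⟨trivial, Function.ne_iff.2 ⟨⟨0, by omega⟩, ?_⟩⟩
    simp [stepVec, Nat.pos_of_ne_zero hj0]

/-- The set of eigenvalues of `L` is exactly `{0} ∪ {m/(m+1) - i/(i+2) : i = 1, …, m-1}`. -/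
theorem Lmat_spectrum (m : ℕ) (hm : 2 ≤ m) :
    {μ : ℝ | ∃ v : Fin m → ℝ, v ≠ 0 ∧ (Lmat m).mulVec v = μ • v} =
      {0} ∪ {a : ℝ | ∃ i : ℕ, 1 ≤ i ∧ i ≤ m - 1 ∧
        a = (m : ℝ) / ((m : ℝ) + 1) - (i : ℝ) / ((i : ℝ) + 2)} := by
  have exists_eigenvector {μ : ℝ} (j : ℕ) (hj : j < m) (hμ : lmatEigenvalue m j = μ) :
      ∃ v : Fin m → ℝ, v ≠ 0 ∧ (Lmat m).mulVec v = μ • v :=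
    ⟨_, (hasEigenvector_toLin'_iff.1 (hμ ▸ hasEigenvector_lmatEigenvector hj)).symm⟩
  ext μ
  simp only [Set.mem_ofPred_eq, Set.mem_union, Set.mem_singleton_iff]
  constructor
  · rintro ⟨v, hv, hLv⟩
    obtain ⟨j, rfl⟩ := (Module.End.hasEigenvalue_of_hasEigenvector
      (hasEigenvector_toLin'_iff.2 ⟨hLv, hv⟩)).mem_range_of_finrank_le_card
      (μs := fun j : Fin m => lmatEigenvalue m j)
      (fun a b h => Fin.ext (lmatEigenvalue_injOn m a.2 b.2 h))
      (fun j => hasEigenvector_lmatEigenvector j.2) (by simp)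
    by_cases hj0 : (j : ℕ) = 0
    · exact Or.inl (if_pos hj0)
    · exact Or.inr ⟨j, by omega, by omega, if_neg hj0⟩
  · rintro (rfl | ⟨i, hi1, hi2, rfl⟩)
    · exact exists_eigenvector 0 (by omega) (if_pos rfl)
    · exact exists_eigenvector i (by omega) (if_neg (by omega))
end

section
/- For an integer m ≥ 2, the number of indices i ∈ {1, …, m−1} satisfying m/(m+1) − i/(i+2) < (m+3)/(2(m+1)) equals m−2 if m ≥ 11, and equals m−1 if 2 ≤ m ≤ 10. Equivalently: m/(m+1) − 1/3 < (m+3)/(2(m+1)) if and only if m ≤ 10, while m/(m+1) − i/(i+2) < (m+3)/(2(m+1)) for all 2 ≤ i ≤ m−1 and all m ≥ 2. -/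
open scoped Classical

lemma coindex_key (m i : ℕ) :
    ((m : ℝ) / ((m : ℝ) + 1) - (i : ℝ) / ((i : ℝ) + 2) <
        ((m : ℝ) + 3) / (2 * ((m : ℝ) + 1))) ↔ 2 * m < m * i + 5 * i + 6 := by
  have h1 : (0:ℝ) < (m:ℝ) + 1 := by positivity
  have h2 : (0:ℝ) < (i:ℝ) + 2 := by positivity
  rw [div_sub_div _ _ h1.ne' h2.ne', div_lt_div_iff₀ (by positivity) (by positivity)]
  constructor
  · intro h
    have : (2*m : ℝ) < m*i + 5*i + 6 := by nlinarith
    exact_mod_cast this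
  · intro h
    have : (2*m : ℝ) < m*i + 5*i + 6 := by exact_mod_cast h
    nlinarith

/-- The number of indices `i ∈ {1, …, m-1}` with `m/(m+1) - i/(i+2) < (m+3)/(2(m+1))` is
`m-1` if `2 ≤ m ≤ 10` and `m-2` if `m ≥ 11`; equivalently, `m/(m+1) - 1/3 < (m+3)/(2(m+1))`
iff `m ≤ 10`, while the inequality holds for all `2 ≤ i ≤ m-1`. -/
theorem coindex_count (m : ℕ) (hm : 2 ≤ m) :
    ((Finset.Icc 1 (m - 1)).filter (fun i : ℕ =>
        (m : ℝ) / ((m : ℝ) + 1) - (i : ℝ) / ((i : ℝ) + 2) <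
          ((m : ℝ) + 3) / (2 * ((m : ℝ) + 1)))).card =
      (if m ≤ 10 then m - 1 else m - 2) ∧
    ((m : ℝ) / ((m : ℝ) + 1) - 1 / 3 < ((m : ℝ) + 3) / (2 * ((m : ℝ) + 1)) ↔ m ≤ 10) ∧
    (∀ i : ℕ, 2 ≤ i → i ≤ m - 1 →
      (m : ℝ) / ((m : ℝ) + 1) - (i : ℝ) / ((i : ℝ) + 2) <
        ((m : ℝ) + 3) / (2 * ((m : ℝ) + 1))) := by
  refine ⟨?_, ?_, ?_⟩
  · have hset : ((Finset.Icc 1 (m - 1)).filter (fun i : ℕ =>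
        (m : ℝ) / ((m : ℝ) + 1) - (i : ℝ) / ((i : ℝ) + 2) <
          ((m : ℝ) + 3) / (2 * ((m : ℝ) + 1)))) =
        (if m ≤ 10 then Finset.Icc 1 (m-1) else Finset.Icc 2 (m-1)) := by
      split_ifs with h
      · rw [Finset.filter_eq_self]
        intro i hi
        rw [Finset.mem_Icc] at hi
        rw [coindex_key m i]
        have : m * 1 ≤ m * i := Nat.mul_le_mul_left m hi.1
        omega
      · ext i
        simp only [Finset.mem_filter, Finset.mem_Icc, coindex_key m i]
        constructor
        · rintro ⟨⟨h1, h2⟩, h3⟩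
          refine ⟨?_, h2⟩
          by_contra hc
          have hi1 : i = 1 := by omega
          subst hi1
          omega
        · rintro ⟨h1, h2⟩
          have : m * 2 ≤ m * i := Nat.mul_le_mul_left m h1
          exact ⟨⟨by omega, h2⟩, by omega⟩
    rw [hset]
    split_ifs with h <;> simp [Nat.card_Icc] <;> omega
  · have h := coindex_key m 1
    norm_num at h
    rw [h]
    omega
  · intro i hi2 hi
    rw [coindex_key m i]
    have : m * 2 ≤ m * i := Nat.mul_le_mul_left m hi2
    omega
end

section
/- Let r ≥ 3 be an integer and ρ a real number with ρ > 1/4, and let M be the r×r real symmetric matrix with entries M_{st} = −1/(k + k²) where k = max(s,t), for s ≠ t, and M_{ss} = (s − 1 − s²)/(s + s²) + 3/2 − 2ρ. Then the smallest eigenvalue λ of M satisfies λ ≤ 1 − 2ρ < 2ρ. -/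
/-!
The smallest eigenvalue `λ` of a real symmetric matrix `A` is the minimum of its spectrum, so
`A - λ • 1` is positive semidefinite and `λ ‖w‖² ≤ wᵀ A w` for every `w`. For `M` and
`w = (1, 1, -2, 0, …, 0)` one has `‖w‖² = 6` and `wᵀ M w = 6C - 3`, where `C = 3/2 - 2ρ`;
hence `λ ≤ C - 1/2 = 1 - 2ρ`, and `1 - 2ρ < 2ρ` is just `ρ > 1/4`.
-/

/-- The `r × r` matrix with off-diagonal entries `M_{st} = -1/(k+k²)`, `k = max(s,t)`, and
diagonal entries `M_{ss} = (s-1-s²)/(s+s²) + C` (a Lean index `s : Fin r` corresponds to the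
paper index `s + 1`). -/
noncomputable def Mmat (r : ℕ) (C : ℝ) : Matrix (Fin r) (Fin r) ℝ :=
  fun s t =>
    if s = t then
      (((s : ℕ) : ℝ) + 1 - 1 - (((s : ℕ) : ℝ) + 1) ^ 2) /
          ((((s : ℕ) : ℝ) + 1) + (((s : ℕ) : ℝ) + 1) ^ 2) + C
    else
      -1 / (((max (s : ℕ) (t : ℕ) : ℕ) : ℝ) + 1 + (((max (s : ℕ) (t : ℕ) : ℕ) : ℝ) + 1) ^ 2)

open Matrix
open scoped ComplexOrder Pointwise

namespace Matrix

variable {n : Type*} [Fintype n] [DecidableEq n]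

lemma mem_spectrum_of_mulVec_eq_smul {K : Type*} [Field K] {A : Matrix n n K} {μ : K}
    {v : n → K} (hv : v ≠ 0) (hAv : A *ᵥ v = μ • v) : μ ∈ spectrum K A := by
  rw [← spectrum_toLin']
  exact (Module.End.hasEigenvalue_of_hasEigenvector
    ⟨by simpa [Module.End.mem_eigenspace_iff] using hAv, hv⟩).mem_spectrum

namespace IsHermitian

variable {𝕜 : Type*} [RCLike 𝕜] {A : Matrix n n 𝕜}

lemma exists_eigenvalues_eq_of_mulVec_eq_smul (hA : A.IsHermitian) {μ : ℝ} {v : n → 𝕜}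
    (hv : v ≠ 0) (hAv : A *ᵥ v = μ • v) : ∃ i, hA.eigenvalues i = μ := by
  have h : (μ : 𝕜) ∈ spectrum 𝕜 A :=
    mem_spectrum_of_mulVec_eq_smul hv (by rwa [← RCLike.real_smul_eq_coe_smul])
  rw [hA.spectrum_eq_image_range] at h
  obtain ⟨_, ⟨i, rfl⟩, hi⟩ := h
  exact ⟨i, RCLike.ofReal_injective hi⟩

lemma posSemidef_sub_smul_one_of_le_eigenvalues (hA : A.IsHermitian) {c : ℝ}
    (hc : ∀ i, c ≤ hA.eigenvalues i) : (A - c • 1).PosSemidef := by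
  have hB : (A - c • 1).IsHermitian := hA.sub (by simp [IsHermitian, conjTranspose_smul])
  rw [hB.posSemidef_iff_eigenvalues_nonneg]
  intro i
  have h : hB.eigenvalues i ∈ spectrum ℝ A - {c} := by
    rw [spectrum.sub_singleton_eq, Algebra.algebraMap_eq_smul_one]
    exact hB.eigenvalues_mem_spectrum_real i
  rw [hA.spectrum_real_eq_range_eigenvalues] at h
  obtain ⟨_, ⟨j, rfl⟩, _, rfl, hj⟩ := h
  simp only [Pi.zero_apply, ← hj, sub_nonneg, hc j]

lemma mul_re_dotProduct_self_le (hA : A.IsHermitian) {c : ℝ} (hc : ∀ i, c ≤ hA.eigenvalues i)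
    (x : n → 𝕜) : c * RCLike.re (star x ⬝ᵥ x) ≤ RCLike.re (star x ⬝ᵥ A *ᵥ x) := by
  have h := (hA.posSemidef_sub_smul_one_of_le_eigenvalues hc).re_dotProduct_nonneg x
  simpa [sub_mulVec, smul_mulVec, dotProduct_smul, RCLike.smul_re] using h

end IsHermitian
end Matrix

lemma Mmat_isHermitian (r : ℕ) (C : ℝ) : (Mmat r C).IsHermitian := by
  ext s t
  by_cases hst : s = t
  · simp [Mmat, hst]
  · simp [Mmat, hst, Ne.symm hst, max_comm]

noncomputable def testVector (k : ℕ) : Fin (k + 3) → ℝ :=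
  Pi.single 0 1 + Pi.single 1 1 + Pi.single 2 (-2)

lemma testVector_dotProduct_self (k : ℕ) : testVector k ⬝ᵥ testVector k = 6 := by
  have h2 : 2 % (k + 3) = 2 := Nat.mod_eq_of_lt (by omega)
  norm_num [testVector, dotProduct_add, Fin.ext_iff, h2]

lemma testVector_dotProduct_Mmat_mulVec (k : ℕ) (C : ℝ) :
    testVector k ⬝ᵥ Mmat (k + 3) C *ᵥ testVector k = 6 * C - 3 := by
  have h2 : 2 % (k + 3) = 2 := Nat.mod_eq_of_lt (by omega)
  norm_num [testVector, Mmat, mulVec_add, dotProduct_add, add_dotProduct, Fin.ext_iff, h2]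
  ring

/-- For `r ≥ 3` and `ρ > 1/4`, with `C = 3/2 - 2ρ`, the smallest eigenvalue `λ` of `M`
satisfies `λ ≤ 1 - 2ρ < 2ρ`. -/
theorem smallest_eigenvalue_bound (r : ℕ) (hr : 3 ≤ r) (ρ : ℝ) (hρ : 1 / 4 < ρ) :
    ∃ lam : ℝ,
      (∃ v : Fin r → ℝ, v ≠ 0 ∧ (Mmat r (3 / 2 - 2 * ρ)).mulVec v = lam • v) ∧
      (∀ μ : ℝ, (∃ v : Fin r → ℝ, v ≠ 0 ∧ (Mmat r (3 / 2 - 2 * ρ)).mulVec v = μ • v) →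
        lam ≤ μ) ∧
      lam ≤ 1 - 2 * ρ ∧ 1 - 2 * ρ < 2 * ρ := by
  obtain ⟨k, rfl⟩ := Nat.exists_eq_add_of_le' hr
  have hM := Mmat_isHermitian (k + 3) (3 / 2 - 2 * ρ)
  obtain ⟨i, hi⟩ := Finite.exists_min hM.eigenvalues
  refine ⟨hM.eigenvalues i, ⟨_, ?_, hM.mulVec_eigenvectorBasis i⟩, ?_, ?_, by linarith⟩
  · simpa using hM.eigenvectorBasis.orthonormal.ne_zero i
  · rintro μ ⟨v, hv, hMv⟩
    obtain ⟨j, rfl⟩ := hM.exists_eigenvalues_eq_of_mulVec_eq_smul hv hMv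
    exact hi j
  · have h := hM.mul_re_dotProduct_self_le hi (testVector k)
    simp only [star_trivial, RCLike.re_to_real, testVector_dotProduct_self,
      testVector_dotProduct_Mmat_mulVec] at h
    linarith
end
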